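/- arXiv:1910.02333 — 5 statements merged into one kernel-verified Lean document; each statement's English description precedes it below -/
import Mathlib

section
/- Let f(x) = Σ_{k=1}^K vₖ·max{0, wₖx − bₖ} + ux + s with all wₖ ≠ 0 and all knots tₖ := bₖ/wₖ distinct. Then the second-order total variation of f (the total variation of its derivative f', which is a piecewise-constant function) equals Σ_{k=1}^K |vₖ|·|wₖ|. -/
/-!
With `t = b / w`, a neuron decomposes as `max 0 (w x - b) = |w| (x - t)₊ + min w 0 (x - t)`, so the
right derivative of `f` is the step function `∑ₖ vₖ |wₖ| 𝟙[tₖ, ∞) + const`, whose jumps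
`vₖ |wₖ|` sit at the distinct knots `tₖ`. Its variation is at most `∑ₖ |vₖ| |wₖ|` by subadditivity.
Conversely, adding the knots in increasing order, a point `m` strictly between the largest knot
`t` and all the others bounds the variation on `Iic t` below by the variation on `Iic m`, where
the last jump is invisible, plus the jump across `[m, t]`.
-/

open Set Filter Topology

section Variation

variable {α E : Type*} [LinearOrder α] [SeminormedAddCommGroup E]

theorem eVariationOn_add_le (f g : α → E) (s : Set α) :
    eVariationOn (f + g) s ≤ eVariationOn f s + eVariationOn g s := by
  refine iSup_le fun ⟨n, u, hu, us⟩ => ?_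
  calc ∑ i ∈ Finset.range n, edist ((f + g) (u (i + 1))) ((f + g) (u i))
      ≤ ∑ i ∈ Finset.range n,
          (edist (f (u (i + 1))) (f (u i)) + edist (g (u (i + 1))) (g (u i))) :=
        Finset.sum_le_sum fun i _ => edist_add_add_le _ _ _ _
    _ ≤ eVariationOn f s + eVariationOn g s := by
        rw [Finset.sum_add_distrib]
        exact add_le_add (eVariationOn.sum_le hu us) (eVariationOn.sum_le hu us)

theorem eVariationOn_sum_le {ι : Type*} (t : Finset ι) (F : ι → α → E) (s : Set α) :
    eVariationOn (∑ i ∈ t, F i) s ≤ ∑ i ∈ t, eVariationOn (F i) s := by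
  classical
  induction t using Finset.induction_on with
  | empty => simp [eVariationOn]
  | insert a t ha ih =>
    rw [Finset.sum_insert ha, Finset.sum_insert ha]
    exact (eVariationOn_add_le _ _ s).trans (add_le_add_right ih _)

theorem eVariationOn_add_const (f : α → E) (c : E) (s : Set α) :
    eVariationOn (fun x => f x + c) s = eVariationOn f s := by
  simp only [eVariationOn, edist_add_right]

end Variation

theorem MonotoneOn.eVariationOn_le_of_sub_le {α : Type*} [LinearOrder α] {f : α → ℝ}
    {s : Set α} {C : ℝ} (hf : MonotoneOn f s) (h : ∀ x ∈ s, ∀ y ∈ s, f y - f x ≤ C) :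
    eVariationOn f s ≤ ENNReal.ofReal C := by
  rw [eVariationOn.eq_biSup_inter_Icc]
  simp only [mem_ofPred_eq, iSup_le_iff, and_imp, Prod.forall]
  intro a b as bs _
  rw [hf.eVariationOn_eq as bs]
  exact ENNReal.ofReal_le_ofReal (h a as b bs)

theorem monotone_indicator_Ici_one (t : ℝ) : Monotone ((Ici t).indicator (1 : ℝ → ℝ)) := by
  intro x y hxy
  simp only [indicator_apply, mem_Ici, Pi.one_apply]
  split_ifs <;> grind

theorem eVariationOn_const_mul_indicator_Ici_le (c t : ℝ) (s : Set ℝ) :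
    eVariationOn (fun x => c * (Ici t).indicator 1 x) s ≤ ENNReal.ofReal |c| := by
  have hH : eVariationOn ((Ici t).indicator (1 : ℝ → ℝ)) s ≤ 1 := by
    rw [← ENNReal.ofReal_one]
    refine ((monotone_indicator_Ici_one t).monotoneOn s).eVariationOn_le_of_sub_le fun x _ y _ => ?_
    simp only [indicator_apply, Pi.one_apply]
    split_ifs <;> norm_num
  calc eVariationOn (fun x => c * (Ici t).indicator 1 x) s
      ≤ ‖c‖₊ * eVariationOn ((Ici t).indicator (1 : ℝ → ℝ)) s :=
        (lipschitzWith_smul c).lipschitzOnWith.comp_eVariationOn_le (mapsTo_univ _ _)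
    _ ≤ ENNReal.ofReal |c| := by
        grw [hH, mul_one, ← Real.enorm_eq_ofReal_abs]
        rfl

theorem max_zero_mul_sub_eq {w : ℝ} (hw : w ≠ 0) (b y : ℝ) :
    max 0 (w * y - b) = |w| * max 0 (y - b / w) + min w 0 * (y - b / w) := by
  have hwy : w * y - b = w * (y - b / w) := by field_simp
  rw [hwy]
  rcases hw.lt_or_gt with hw | hw <;> rcases le_total 0 (y - b / w) with hz | hz <;>
    simp [abs_of_neg, abs_of_pos, hw, hw.le, hz, mul_nonpos_iff, mul_nonneg_of_nonpos_of_nonpos]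

theorem hasDerivWithinAt_max_zero_sub_Ici (t x : ℝ) :
    HasDerivWithinAt (fun y => max 0 (y - t)) ((Ici t).indicator 1 x) (Ici x) x := by
  rcases le_or_gt t x with htx | hxt
  · rw [indicator_of_mem (mem_Ici.2 htx), Pi.one_apply]
    refine ((hasDerivWithinAt_id x _).sub_const t).congr (fun y hy => ?_) ?_
    · exact max_eq_right (sub_nonneg.2 (htx.trans hy))
    · exact max_eq_right (sub_nonneg.2 htx)
  · rw [indicator_of_notMem (notMem_Ici.2 hxt)]
    refine ((hasDerivAt_const x (0 : ℝ)).congr_of_eventuallyEq ?_).hasDerivWithinAt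
    filter_upwards [eventually_lt_nhds hxt] with y hy
    exact max_eq_left (sub_nonpos.2 hy.le)

theorem hasDerivWithinAt_max_zero_mul_sub_Ici (w b x : ℝ) :
    HasDerivWithinAt (fun y => max 0 (w * y - b))
      (|w| * (Ici (b / w)).indicator 1 x + min w 0) (Ici x) x := by
  rcases eq_or_ne w 0 with rfl | hw
  · simpa using hasDerivWithinAt_const x (Ici x) (max 0 (-b))
  simp_rw [max_zero_mul_sub_eq hw]
  simpa using ((hasDerivWithinAt_max_zero_sub_Ici (b / w) x).const_mul |w|).fun_add
    (((hasDerivWithinAt_id x _).sub_const (b / w)).const_mul (min w 0))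

section JumpFunction

variable {ι : Type*}

noncomputable def jumpFunction (s : Finset ι) (t c : ι → ℝ) (x : ℝ) : ℝ :=
  ∑ i ∈ s, c i * (Ici (t i)).indicator 1 x

theorem jumpFunction_eq_sum_of_forall_le {s : Finset ι} {t : ι → ℝ} (c : ι → ℝ) {x : ℝ}
    (hx : ∀ i ∈ s, t i ≤ x) : jumpFunction s t c x = ∑ i ∈ s, c i :=
  Finset.sum_congr rfl fun i hi => by simp [indicator_of_mem (mem_Ici.2 (hx i hi))]

theorem jumpFunction_insert_of_lt [DecidableEq ι] {s : Finset ι} {t : ι → ℝ} (c : ι → ℝ)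
    {a : ι} (ha : a ∉ s) {x : ℝ} (hx : x < t a) :
    jumpFunction (insert a s) t c x = jumpFunction s t c x := by
  simp [jumpFunction, Finset.sum_insert ha, indicator_of_notMem (notMem_Ici.2 hx)]

theorem ofReal_sum_abs_le_eVariationOn_jumpFunction_Iic {s : Finset ι} {t : ι → ℝ}
    (ht : InjOn t s) (c : ι → ℝ) {b : ℝ} (hb : ∀ i ∈ s, t i ≤ b) :
    ENNReal.ofReal (∑ i ∈ s, |c i|) ≤ eVariationOn (jumpFunction s t c) (Iic b) := by
  classical
  induction s using Finset.induction_on_max_value t generalizing b with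
  | empty => simp
  | insert a s ha hmax ih =>
    have hlt : ∀ i ∈ s, t i < t a := fun i hi => (hmax i hi).lt_of_ne fun h =>
      ha (ht (Finset.mem_insert_of_mem hi) (Finset.mem_insert_self a s) h ▸ hi)
    have hsep : ∀ᶠ m in 𝓝[<] t a, (∀ i ∈ s, t i < m) ∧ m < t a :=
      ((Finset.eventually_all s).2 fun i hi => eventually_nhdsWithin_of_eventually_nhds
        (eventually_gt_nhds (hlt i hi))).and self_mem_nhdsWithin
    obtain ⟨m, hm, hma⟩ := hsep.exists
    have hab : t a ≤ b := hb a (Finset.mem_insert_self a s)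
    have hjump : edist (jumpFunction (insert a s) t c (t a)) (jumpFunction (insert a s) t c m)
        = ENNReal.ofReal |c a| := by
      rw [jumpFunction_eq_sum_of_forall_le c (Finset.forall_mem_insert _ _ _ |>.2 ⟨le_rfl, hmax⟩),
        jumpFunction_insert_of_lt c ha hma,
        jumpFunction_eq_sum_of_forall_le c fun i hi => (hm i hi).le, Finset.sum_insert ha,
        edist_dist, Real.dist_eq, add_sub_cancel_right]
    have hleft : eVariationOn (jumpFunction (insert a s) t c) (Iic m)
        = eVariationOn (jumpFunction s t c) (Iic m) :=
      eVariationOn.congr fun x hx => jumpFunction_insert_of_lt c ha ((mem_Iic.1 hx).trans_lt hma)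
    calc ENNReal.ofReal (∑ i ∈ insert a s, |c i|)
        = ENNReal.ofReal (∑ i ∈ s, |c i|) + ENNReal.ofReal |c a| := by
          rw [Finset.sum_insert ha, add_comm, ENNReal.ofReal_add (by positivity) (abs_nonneg _)]
      _ ≤ eVariationOn (jumpFunction (insert a s) t c) (Iic m)
          + eVariationOn (jumpFunction (insert a s) t c) (Icc m b) := by
          rw [hleft, ← hjump]
          gcongr
          · exact ih (ht.mono (by simp)) fun i hi => (hm i hi).le
          · exact eVariationOn.edist_le _ ⟨hma.le, hab⟩ ⟨le_rfl, hma.le.trans hab⟩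
      _ ≤ eVariationOn (jumpFunction (insert a s) t c) (Iic b) :=
          (eVariationOn.add_le_union _ fun x hx y hy => (mem_Iic.1 hx).trans hy.1).trans
            (eVariationOn.mono _ (union_subset (Iic_subset_Iic.2 (hma.le.trans hab))
              fun _ hy => hy.2))

theorem eVariationOn_jumpFunction {s : Finset ι} {t : ι → ℝ} (ht : InjOn t s) (c : ι → ℝ) :
    eVariationOn (jumpFunction s t c) univ = ENNReal.ofReal (∑ i ∈ s, |c i|) := by
  refine le_antisymm ?_ ?_
  · have hsum : jumpFunction s t c = ∑ i ∈ s, fun x => c i * (Ici (t i)).indicator 1 x := by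
      ext x
      simp [jumpFunction]
    rw [hsum, ENNReal.ofReal_sum_of_nonneg fun i _ => abs_nonneg (c i)]
    exact (eVariationOn_sum_le _ _ _).trans
      (Finset.sum_le_sum fun i _ => eVariationOn_const_mul_indicator_Ici_le _ _ _)
  · obtain ⟨b, hb⟩ := (s.image t).bddAbove
    exact (ofReal_sum_abs_le_eVariationOn_jumpFunction_Iic ht c
      fun i hi => hb (Finset.mem_coe.2 (Finset.mem_image_of_mem t hi))).trans
      (eVariationOn.mono _ (subset_univ _))

end JumpFunction

theorem stmt_10_general (K : ℕ) (v w b : Fin K → ℝ) (u s : ℝ)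
    (hknots : ∀ j k, j ≠ k → b j / w j ≠ b k / w k)
    (f : ℝ → ℝ)
    (hf : ∀ x : ℝ, f x = ∑ k, v k * max 0 (w k * x - b k) + u * x + s) :
    eVariationOn (fun x => derivWithin f (Set.Ici x) x) Set.univ
      = ENNReal.ofReal (∑ k, |v k| * |w k|) := by
  set g : ℝ → ℝ := fun x => jumpFunction Finset.univ (fun k => b k / w k) (fun k => v k * |w k|) x
    + (∑ k, v k * min (w k) 0 + u)
  have hderiv : ∀ x, HasDerivWithinAt f (g x) (Ici x) x := by
    intro x
    have := ((HasDerivWithinAt.fun_sum (u := Finset.univ) fun k _ =>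
      (hasDerivWithinAt_max_zero_mul_sub_Ici (w k) (b k) x).const_mul (v k)).fun_add
      ((hasDerivWithinAt_id x _).const_mul u)).add_const s
    refine (this.congr (fun y _ => hf y) (hf x)).congr_deriv ?_
    simp [g, jumpFunction, mul_add, Finset.sum_add_distrib, mul_assoc, add_assoc]
  have hinj : InjOn (fun k => b k / w k) (Finset.univ : Finset (Fin K)) :=
    fun j _ k _ h => not_imp_not.1 (hknots j k) h
  rw [show (fun x => derivWithin f (Ici x) x) = g from
    funext fun x => (hderiv x).derivWithin (uniqueDiffOn_Ici x x self_mem_Ici),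
    eVariationOn_add_const, eVariationOn_jumpFunction hinj]
  simp_rw [abs_mul, abs_abs]

/-- For a ReLU network with skip connection and distinct knots `bₖ/wₖ`, the
second-order total variation of `f` — the total variation of its (right)
derivative — equals the path-norm `Σ |vₖ|·|wₖ|`. -/
theorem stmt_10 (K : ℕ) (v w b : Fin K → ℝ) (u s : ℝ)
    (hw : ∀ k, w k ≠ 0)
    (hknots : ∀ j k, j ≠ k → b j / w j ≠ b k / w k)
    (f : ℝ → ℝ)
    (hf : ∀ x : ℝ, f x = ∑ k, v k * max 0 (w k * x - b k) + u * x + s) :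
    eVariationOn (fun x => derivWithin f (Set.Ici x) x) Set.univ
      = ENNReal.ofReal (∑ k, |v k| * |w k|) :=
  stmt_10_general K v w b u s hknots f hf
end

section
/- Let t₁ < t₂ < … < t_N be real numbers and y₁,…,y_N ∈ ℝ. Among all continuous piecewise-affine functions f : ℝ → ℝ with finitely many knots satisfying f(tₙ) = yₙ for all n, the connect-the-dots interpolant (affine on each [tₙ, tₙ₊₁], extended affinely beyond the endpoints with the adjacent slopes) minimizes the sum of the absolute values of the slope changes at the knots, and the minimum value equals Σ_{n=1}^{N−2} |mₙ₊₁ − mₙ| where mₙ = (yₙ₊₁ − yₙ)/(tₙ₊₁ − tₙ). -/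
/-!
A continuous function that is affine off a finite set `S` is, up to an affine function, the ReLU
combination `∑ p ∈ S, J p * max (x - p) 0`, where `J p` is its slope jump at `p`: subtracting this
combination leaves a function without slope jumps, which is locally affine everywhere and hence
affine. The data slope `m n` is therefore `a + ∑ p ∈ S, J p * s p n`, where `s p n ∈ [0, 1]` is the
secant slope of the ReLU at `p` over `[t n, t (n + 1)]`, nondecreasing in `n` by convexity. So
`|m (n + 1) - m n| ≤ ∑ p ∈ S, |J p| * (s p (n + 1) - s p n)`, and summing over `n` telescopes to at
most `∑ p ∈ S, |J p|`. For the connect-the-dots interpolant the jump at `t (n + 1)` is exactly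
`m (n + 1) - m n`, and the jumps at the two end points vanish.
-/

open Set Filter Topology

def EventuallyAffine (l : Filter ℝ) (f : ℝ → ℝ) (a : ℝ) : Prop :=
  ∃ c, ∀ᶠ z in l, f z = a * z + c

namespace EventuallyAffine

variable {l : Filter ℝ} {f g : ℝ → ℝ} {a b : ℝ}

theorem of_eqOn {s : Set ℝ} (hs : s ∈ l) {x y : ℝ} (h : ∀ z ∈ s, f z = y + a * (z - x)) :
    EventuallyAffine l f a :=
  ⟨y - a * x, eventually_of_mem hs fun z hz => by rw [h z hz]; ring⟩

theorem mono {l' : Filter ℝ} (h : EventuallyAffine l f a) (hl : l' ≤ l) :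
    EventuallyAffine l' f a :=
  let ⟨c, hc⟩ := h; ⟨c, hc.filter_mono hl⟩

theorem sub (hf : EventuallyAffine l f a) (hg : EventuallyAffine l g b) :
    EventuallyAffine l (fun z => f z - g z) (a - b) := by
  obtain ⟨c, hc⟩ := hf
  obtain ⟨d, hd⟩ := hg
  exact ⟨c - d, by filter_upwards [hc, hd] with z hcz hdz; rw [hcz, hdz]; ring⟩

theorem const_mul (hf : EventuallyAffine l f a) (k : ℝ) :
    EventuallyAffine l (fun z => k * f z) (k * a) := by
  obtain ⟨c, hc⟩ := hf
  exact ⟨k * c, by filter_upwards [hc] with z hz; rw [hz]; ring⟩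

theorem sum {ι : Type*} {s : Finset ι} {g : ι → ℝ → ℝ} {a : ι → ℝ}
    (h : ∀ i ∈ s, EventuallyAffine l (g i) (a i)) :
    EventuallyAffine l (fun z => ∑ i ∈ s, g i z) (∑ i ∈ s, a i) := by
  choose! c hc using h
  refine ⟨∑ i ∈ s, c i, ?_⟩
  filter_upwards [(eventually_all_finset s).2 hc] with z hz
  rw [Finset.sum_congr rfl hz, Finset.sum_add_distrib, Finset.sum_mul]

theorem derivWithin_eq {s : Set ℝ} {x : ℝ} (h : EventuallyAffine (𝓝[s] x) f a) (hx : x ∈ s)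
    (hs : UniqueDiffWithinAt ℝ s x) : derivWithin f s x = a := by
  obtain ⟨c, hc⟩ := h
  have hline : HasDerivWithinAt (fun z => a * z + c) a s x := by
    simpa using (((hasDerivAt_id x).const_mul a).add_const c).hasDerivWithinAt
  exact (hline.congr_of_eventuallyEq_of_mem hc hx).derivWithin hs

theorem insert_of_continuousWithinAt {s : Set ℝ} {x : ℝ} [(𝓝[s] x).NeBot]
    (h : EventuallyAffine (𝓝[s] x) f a) (hf : ContinuousWithinAt f s x) :
    EventuallyAffine (𝓝[insert x s] x) f a := by
  obtain ⟨c, hc⟩ := h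
  have hline : Tendsto (fun z => a * z + c) (𝓝[s] x) (𝓝 (a * x + c)) :=
    ((continuous_const.mul continuous_id).add continuous_const).continuousWithinAt
  have hx : f x = a * x + c := tendsto_nhds_unique hf (hline.congr' (hc.mono fun _ h => h.symm))
  exact ⟨c, by rw [nhdsWithin_insert, eventually_sup]; exact ⟨hx, hc⟩⟩

theorem nhds_of_nhdsLE_of_nhdsGE {x : ℝ} (hle : EventuallyAffine (𝓝[≤] x) f a)
    (hge : EventuallyAffine (𝓝[≥] x) f a) : EventuallyAffine (𝓝 x) f a := by
  obtain ⟨c, hc⟩ := hle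
  obtain ⟨d, hd⟩ := hge
  have hcd : c = d := by
    have := (hc.self_of_nhdsWithin self_mem_Iic).symm.trans (hd.self_of_nhdsWithin self_mem_Ici)
    linarith
  subst hcd
  exact ⟨c, by rw [← nhdsLE_sup_nhdsGE, eventually_sup]; exact ⟨hc, hd⟩⟩

end EventuallyAffine

theorem exists_affine_of_forall_eventuallyAffine_nhds {f : ℝ → ℝ}
    (h : ∀ x, ∃ a, EventuallyAffine (𝓝 x) f a) : ∃ a c, ∀ z, f z = a * z + c := by
  have hderiv : ∀ x a, EventuallyAffine (𝓝 x) f a → HasDerivAt f a x := fun x a ⟨c, hc⟩ => by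
    simpa using (((hasDerivAt_id x).const_mul a).add_const c).congr_of_eventuallyEq hc
  have hconst : IsLocallyConstant (deriv f) := by
    refine (IsLocallyConstant.iff_eventually_eq _).2 fun x => ?_
    obtain ⟨a, c, hc⟩ := h x
    filter_upwards [hc.eventually_nhds] with y hy
    rw [(hderiv y a ⟨c, hy⟩).deriv, (hderiv x a ⟨c, hc⟩).deriv]
  set a := deriv f 0
  have hf' : ∀ x, HasDerivAt f a x := fun x => by
    obtain ⟨b, hb⟩ := h x
    rw [show a = b from (hconst.apply_eq_of_preconnectedSpace 0 x).trans (hderiv x b hb).deriv]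
    exact hderiv x b hb
  have hg : ∀ x, HasDerivAt (fun z => f z - a * z) 0 x := fun x => by
    simpa using (hf' x).fun_sub ((hasDerivAt_id x).const_mul a)
  refine ⟨a, f 0, fun z => ?_⟩
  have := is_const_of_deriv_eq_zero (fun x => (hg x).differentiableAt) (fun x => (hg x).deriv) z 0
  simp only [mul_zero, sub_zero] at this
  linarith

theorem eventuallyAffine_relu_nhdsLE (p x : ℝ) :
    EventuallyAffine (𝓝[≤] x) (fun z => max (z - p) 0) (if p < x then 1 else 0) := by
  split_ifs with h
  · refine ⟨-p, ((eventually_gt_nhds h).filter_mono nhdsWithin_le_nhds).mono fun z hz => ?_⟩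
    dsimp only; rw [max_eq_left (by linarith)]; ring
  · refine ⟨0, eventually_mem_nhdsWithin.mono fun z (hz : z ≤ x) => ?_⟩
    dsimp only; rw [max_eq_right (by linarith)]; ring

theorem eventuallyAffine_relu_nhdsGE (p x : ℝ) :
    EventuallyAffine (𝓝[≥] x) (fun z => max (z - p) 0) (if p ≤ x then 1 else 0) := by
  split_ifs with h
  · refine ⟨-p, eventually_mem_nhdsWithin.mono fun z (hz : x ≤ z) => ?_⟩
    dsimp only; rw [max_eq_left (by linarith)]; ring
  · refine ⟨0, ((eventually_lt_nhds (not_le.1 h)).filter_mono nhdsWithin_le_nhds).mono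
      fun z hz => ?_⟩
    dsimp only; rw [max_eq_right (by linarith)]; ring

theorem slope_relu_mem_Icc (p u v : ℝ) : slope (fun z => max (z - p) 0) u v ∈ Icc 0 1 := by
  wlog huv : u < v generalizing u v
  · rcases (not_lt.1 huv).eq_or_lt with rfl | hvu
    · simp
    · rw [slope_comm]; exact this v u hvu
  rw [slope_def_field]
  refine ⟨div_nonneg (sub_nonneg.2 (max_le_max (by linarith) le_rfl)) (by linarith), ?_⟩
  rw [div_le_one (by linarith)]
  calc max (v - p) 0 - max (u - p) 0 ≤ max (v - p - (u - p)) (0 - 0) := max_sub_max_le_max _ _ _ _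
    _ = v - u := by rw [sub_self, max_eq_left (by linarith)]; ring

theorem slope_relu_le_slope_relu (p : ℝ) {u v w : ℝ} (huv : u < v) (hvw : v < w) :
    slope (fun z => max (z - p) 0) u v ≤ slope (fun z => max (z - p) 0) v w := by
  have hconv : ConvexOn ℝ univ (fun z : ℝ => max (z - p) 0) :=
    ((convexOn_id convex_univ).sub (concaveOn_const p convex_univ)).sup
      (convexOn_const 0 convex_univ)
  simpa only [slope_def_field] using hconv.slope_mono_adjacent (mem_univ u) (mem_univ w) huv hvw

theorem Finset.eventually_notMem_nhdsNE {X : Type*} [TopologicalSpace X] [T1Space X]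
    (S : Finset X) (x : X) : ∀ᶠ z in 𝓝[≠] x, z ∉ (S : Set X) :=
  mem_of_superset (nhdsNE_of_nhdsNE_sdiff_finite univ_mem S.finite_toSet) fun _ hz => hz.2

def IsPiecewiseAffine (S : Finset ℝ) (f : ℝ → ℝ) : Prop :=
  ∀ x : ℝ, x ∉ (S : Set ℝ) →
    ∃ a c : ℝ, ∀ z ∈ connectedComponentIn ((S : Set ℝ))ᶜ x, f z = a * z + c

noncomputable def slopeJump (f : ℝ → ℝ) (x : ℝ) : ℝ :=
  derivWithin f (Ici x) x - derivWithin f (Iic x) x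

namespace IsPiecewiseAffine

variable {S : Finset ℝ} {f : ℝ → ℝ}

theorem exists_affine_on (hf : IsPiecewiseAffine S f) {I : Set ℝ} (hI : IsPreconnected I)
    (hne : I.Nonempty) (hIS : I ⊆ (S : Set ℝ)ᶜ) : ∃ a c, ∀ z ∈ I, f z = a * z + c := by
  obtain ⟨x, hx⟩ := hne
  obtain ⟨a, c, h⟩ := hf x (hIS hx)
  exact ⟨a, c, fun z hz => h z (hI.subset_connectedComponentIn hx hIS hz)⟩

theorem eventuallyAffine_nhds (hf : IsPiecewiseAffine S f) {x : ℝ} (hx : x ∉ (S : Set ℝ)) :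
    ∃ a, EventuallyAffine (𝓝 x) f a := by
  obtain ⟨a, c, h⟩ := hf x hx
  have hU : connectedComponentIn ((S : Set ℝ))ᶜ x ∈ 𝓝 x :=
    (S.isClosed.isOpen_compl.connectedComponentIn).mem_nhds (mem_connectedComponentIn hx)
  exact ⟨a, c, eventually_of_mem hU h⟩

theorem eventuallyAffine_nhdsGE (hf : IsPiecewiseAffine S f) (hc : Continuous f) (x : ℝ) :
    EventuallyAffine (𝓝[≥] x) f (derivWithin f (Ici x) x) := by
  obtain ⟨u, hxu, hsub⟩ := mem_nhdsGT_iff_exists_Ioo_subset.1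
    (nhdsGT_le_nhdsNE x (S.eventually_notMem_nhdsNE x))
  obtain ⟨a, c, h⟩ := hf.exists_affine_on isPreconnected_Ioo (nonempty_Ioo.2 hxu) hsub
  have hGT : EventuallyAffine (𝓝[>] x) f a := ⟨c, eventually_of_mem (Ioo_mem_nhdsGT hxu) h⟩
  have hGE : EventuallyAffine (𝓝[≥] x) f a := by
    simpa only [Ioi_insert] using hGT.insert_of_continuousWithinAt hc.continuousWithinAt
  rwa [hGE.derivWithin_eq self_mem_Ici (uniqueDiffOn_Ici x x self_mem_Ici)]

theorem eventuallyAffine_nhdsLE (hf : IsPiecewiseAffine S f) (hc : Continuous f) (x : ℝ) :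
    EventuallyAffine (𝓝[≤] x) f (derivWithin f (Iic x) x) := by
  obtain ⟨u, hux, hsub⟩ := mem_nhdsLT_iff_exists_Ioo_subset.1
    (nhdsLT_le_nhdsNE x (S.eventually_notMem_nhdsNE x))
  obtain ⟨a, c, h⟩ := hf.exists_affine_on isPreconnected_Ioo (nonempty_Ioo.2 hux) hsub
  have hLT : EventuallyAffine (𝓝[<] x) f a := ⟨c, eventually_of_mem (Ioo_mem_nhdsLT hux) h⟩
  have hLE : EventuallyAffine (𝓝[≤] x) f a := by
    simpa only [Iio_insert] using hLT.insert_of_continuousWithinAt hc.continuousWithinAt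
  rwa [hLE.derivWithin_eq self_mem_Iic (uniqueDiffOn_Iic x x self_mem_Iic)]

theorem slopeJump_eq_zero (hf : IsPiecewiseAffine S f) {x : ℝ} (hx : x ∉ (S : Set ℝ)) :
    slopeJump f x = 0 := by
  obtain ⟨a, h⟩ := hf.eventuallyAffine_nhds hx
  rw [slopeJump, (h.mono nhdsWithin_le_nhds).derivWithin_eq self_mem_Ici
      (uniqueDiffOn_Ici x x self_mem_Ici),
    (h.mono nhdsWithin_le_nhds).derivWithin_eq self_mem_Iic (uniqueDiffOn_Iic x x self_mem_Iic),
    sub_self]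

theorem exists_eq_affine_add_sum_relu (hf : IsPiecewiseAffine S f) (hc : Continuous f) :
    ∃ a c, ∀ z, f z = a * z + c + ∑ p ∈ S, slopeJump f p * max (z - p) 0 := by
  set D := fun z => f z - ∑ p ∈ S, slopeJump f p * max (z - p) 0
  suffices ∃ a c, ∀ z, D z = a * z + c from
    let ⟨a, c, h⟩ := this; ⟨a, c, fun z => by linarith [h z]⟩
  refine exists_affine_of_forall_eventuallyAffine_nhds fun x => ?_
  have hLE := (hf.eventuallyAffine_nhdsLE hc x).sub <| EventuallyAffine.sum (s := S)
    fun p _ => (eventuallyAffine_relu_nhdsLE p x).const_mul (slopeJump f p)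
  have hGE := (hf.eventuallyAffine_nhdsGE hc x).sub <| EventuallyAffine.sum (s := S)
    fun p _ => (eventuallyAffine_relu_nhdsGE p x).const_mul (slopeJump f p)
  -- only the ReLU kinked at `x` changes slope at `x`, and `f` does not change slope off `S`
  have hjump : ∑ p ∈ S, (slopeJump f p * (if p ≤ x then 1 else 0)
      - slopeJump f p * (if p < x then 1 else 0)) = slopeJump f x := by
    rw [Finset.sum_congr rfl (g := fun p => if p = x then slopeJump f p else 0), Finset.sum_ite_eq']
    · split_ifs with hx
      · rfl
      · exact (hf.slopeJump_eq_zero hx).symm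
    · intro p _
      rcases lt_trichotomy p x with h | rfl | h
      · simp [h, h.le, h.ne]
      · simp
      · simp [h.not_gt, h.not_ge, h.ne']
  rw [Finset.sum_sub_distrib, slopeJump] at hjump
  have hslope : derivWithin f (Ici x) x - ∑ p ∈ S, slopeJump f p * (if p ≤ x then 1 else 0)
      = derivWithin f (Iic x) x - ∑ p ∈ S, slopeJump f p * (if p < x then 1 else 0) := by
    linarith
  exact ⟨_, hLE.nhds_of_nhdsLE_of_nhdsGE (hslope ▸ hGE)⟩

end IsPiecewiseAffine

theorem sum_abs_sub_le_sum_abs_of_monotone {ι : Type*} (S : Finset ι) (J : ι → ℝ)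
    (s : ι → ℕ → ℝ) (m : ℕ → ℝ) (M : ℕ)
    (hm : ∀ n < M, m (n + 1) - m n = ∑ p ∈ S, J p * (s p (n + 1) - s p n))
    (hmono : ∀ p ∈ S, ∀ n < M, s p n ≤ s p (n + 1))
    (hs : ∀ p ∈ S, 0 ≤ s p 0 ∧ s p M ≤ 1) :
    ∑ n ∈ Finset.range M, |m (n + 1) - m n| ≤ ∑ p ∈ S, |J p| := by
  calc ∑ n ∈ Finset.range M, |m (n + 1) - m n|
      ≤ ∑ n ∈ Finset.range M, ∑ p ∈ S, |J p| * (s p (n + 1) - s p n) := by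
        refine Finset.sum_le_sum fun n hn => ?_
        rw [hm n (Finset.mem_range.1 hn)]
        refine (Finset.abs_sum_le_sum_abs _ _).trans_eq (Finset.sum_congr rfl fun p hp => ?_)
        rw [abs_mul, abs_of_nonneg (sub_nonneg.2 (hmono p hp n (Finset.mem_range.1 hn)))]
    _ = ∑ p ∈ S, |J p| * (s p M - s p 0) := by
        rw [Finset.sum_comm]
        simp only [← Finset.mul_sum, Finset.sum_range_sub (s _)]
    _ ≤ ∑ p ∈ S, |J p| :=
        Finset.sum_le_sum fun p hp =>
          mul_le_of_le_one_right (abs_nonneg _) (by linarith [hs p hp])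

theorem sum_abs_sub_le_sum_abs_slopeJump (N : ℕ) (t y : ℕ → ℝ)
    (ht : ∀ n, n + 1 < N → t n < t (n + 1))
    (m : ℕ → ℝ) (hm : ∀ n, m n = (y (n + 1) - y n) / (t (n + 1) - t n))
    (f : ℝ → ℝ) (S : Finset ℝ) (hc : Continuous f) (hi : ∀ n, n < N → f (t n) = y n)
    (hf : IsPiecewiseAffine S f) :
    ∑ n ∈ Finset.range (N - 2), |m (n + 1) - m n| ≤ ∑ p ∈ S, |slopeJump f p| := by
  obtain ⟨a, c, hrep⟩ := hf.exists_eq_affine_add_sum_relu hc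
  set s : ℝ → ℕ → ℝ := fun p n => slope (fun z => max (z - p) 0) (t n) (t (n + 1))
  have hslope : ∀ n, n + 1 < N → m n = a + ∑ p ∈ S, slopeJump f p * s p n := by
    intro n hn
    have hne : t (n + 1) - t n ≠ 0 := (sub_pos.2 (ht n hn)).ne'
    have hdiff : f (t (n + 1)) - f (t n) = a * (t (n + 1) - t n)
        + ∑ p ∈ S, slopeJump f p * (max (t (n + 1) - p) 0 - max (t n - p) 0) := by
      simp only [hrep, mul_sub, Finset.sum_sub_distrib]
      ring
    simp only [s, slope_def_field, hm n, ← hi n (by omega), ← hi (n + 1) hn, hdiff, add_div,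
      mul_div_cancel_right₀ _ hne, Finset.sum_div, mul_div_assoc]
  refine sum_abs_sub_le_sum_abs_of_monotone S _ s m (N - 2) (fun n hn => ?_) (fun p _ n hn => ?_)
    (fun p _ => ⟨(slope_relu_mem_Icc p _ _).1, (slope_relu_mem_Icc p _ _).2⟩)
  · rw [hslope n (by omega), hslope (n + 1) (by omega)]
    simp only [add_sub_add_left_eq_sub, ← Finset.sum_sub_distrib, mul_sub]
  · exact slope_relu_le_slope_relu p (ht n (by omega)) (ht (n + 1) (by omega))

theorem sum_abs_slopeJump_image_eq (N : ℕ) (hN : 2 ≤ N) (t y m : ℕ → ℝ)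
    (ht : ∀ n, n + 1 < N → t n < t (n + 1)) (f : ℝ → ℝ)
    (hp : ∀ n, n + 1 < N → ∀ x ∈ Icc (t n) (t (n + 1)), f x = y n + m n * (x - t n))
    (hl : ∀ x ∈ Iic (t 0), f x = y 0 + m 0 * (x - t 0))
    (hr : ∀ x ∈ Ici (t (N - 1)), f x = y (N - 1) + m (N - 2) * (x - t (N - 1))) :
    ∑ p ∈ Finset.image t (Finset.range N), |slopeJump f p|
      = ∑ n ∈ Finset.range (N - 2), |m (n + 1) - m n| := by
  obtain ⟨M, rfl⟩ := Nat.exists_eq_add_of_le' hN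
  simp only [Nat.add_sub_cancel, show M + 2 - 1 = M + 1 from rfl] at hr ⊢
  have hright : ∀ n ≤ M, derivWithin f (Ici (t n)) (t n) = m n := fun n hn =>
    (EventuallyAffine.of_eqOn (Icc_mem_nhdsGE (ht n (by omega))) (hp n (by omega))).derivWithin_eq
      self_mem_Ici (uniqueDiffOn_Ici _ _ self_mem_Ici)
  have hleft : ∀ n ≤ M, derivWithin f (Iic (t (n + 1))) (t (n + 1)) = m n := fun n hn =>
    (EventuallyAffine.of_eqOn (Icc_mem_nhdsLE (ht n (by omega))) (hp n (by omega))).derivWithin_eq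
      self_mem_Iic (uniqueDiffOn_Iic _ _ self_mem_Iic)
  have hright_last : derivWithin f (Ici (t (M + 1))) (t (M + 1)) = m M :=
    (EventuallyAffine.of_eqOn self_mem_nhdsWithin hr).derivWithin_eq
      self_mem_Ici (uniqueDiffOn_Ici _ _ self_mem_Ici)
  have hleft_first : derivWithin f (Iic (t 0)) (t 0) = m 0 :=
    (EventuallyAffine.of_eqOn self_mem_nhdsWithin hl).derivWithin_eq
      self_mem_Iic (uniqueDiffOn_Iic _ _ self_mem_Iic)
  have hinj : Set.InjOn t (Finset.range (M + 2)) := by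
    have := strictMonoOn_Iic_of_lt_succ (n := M + 1) (ψ := t) fun n hn => ht n (by omega)
    refine this.injOn.mono fun n hn => ?_
    simp only [Finset.coe_range, mem_Iio] at hn
    exact mem_Iic.2 (by omega)
  rw [Finset.sum_image hinj, Finset.sum_range_succ', Finset.sum_range_succ]
  simp only [slopeJump, hright 0 (Nat.zero_le M), hleft_first, hright_last, hleft M le_rfl,
    sub_self, abs_zero, add_zero]
  exact Finset.sum_congr rfl fun n hn => by
    rw [hright (n + 1) (Finset.mem_range.1 hn), hleft n (Finset.mem_range.1 hn).le]

/-- Among continuous piecewise-affine interpolants with finitely many knots, the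
connect-the-dots interpolant minimizes the sum of absolute slope changes, and
the minimum value is `Σ |mₙ₊₁ − mₙ|` where `mₙ` are the data slopes.  Slope
changes are measured as differences of one-sided derivatives. -/
theorem stmt_11 (N : ℕ) (hN : 2 ≤ N) (t y : ℕ → ℝ)
    (ht : ∀ n, n + 1 < N → t n < t (n + 1))
    (m : ℕ → ℝ) (hm : ∀ n, m n = (y (n + 1) - y n) / (t (n + 1) - t n)) :
    -- the connect-the-dots interpolant attains the value Σ |m (n+1) − m n|
    (∀ f : ℝ → ℝ, Continuous f →
      (∀ n, n < N → f (t n) = y n) →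
      (∀ n, n + 1 < N → ∀ x ∈ Set.Icc (t n) (t (n + 1)), f x = y n + m n * (x - t n)) →
      (∀ x ∈ Set.Iic (t 0), f x = y 0 + m 0 * (x - t 0)) →
      (∀ x ∈ Set.Ici (t (N - 1)), f x = y (N - 1) + m (N - 2) * (x - t (N - 1))) →
      ∑ p ∈ Finset.image t (Finset.range N),
          |derivWithin f (Set.Ici p) p - derivWithin f (Set.Iic p) p|
        = ∑ n ∈ Finset.range (N - 2), |m (n + 1) - m n|) ∧
    -- every continuous piecewise-affine interpolant with finitely many knots does at least as well
    (∀ (f : ℝ → ℝ) (S : Finset ℝ), Continuous f →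
      (∀ n, n < N → f (t n) = y n) →
      (∀ x : ℝ, x ∉ (S : Set ℝ) →
        ∃ a c : ℝ, ∀ z ∈ connectedComponentIn ((S : Set ℝ))ᶜ x, f z = a * z + c) →
      ∑ n ∈ Finset.range (N - 2), |m (n + 1) - m n|
        ≤ ∑ p ∈ S, |derivWithin f (Set.Ici p) p - derivWithin f (Set.Iic p) p|) :=
  ⟨fun f _ _ hp hl hr => sum_abs_slopeJump_image_eq N hN t y m ht f hp hl hr,
    fun f S hc hi hf => sum_abs_sub_le_sum_abs_slopeJump N t y ht m hm f S hc hi hf⟩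
end

section
/- Let γ ≥ 2 be an integer and f(x) = Σ_{k=1}^K vₖ·ρ(wₖx − bₖ) + c(x), where ρ(x) = max{0,x}^(γ−1)/(γ−1)!, each wₖ ≠ 0, and c is a polynomial of degree at most γ−1. Then for every smooth compactly supported test function φ, ∫_ℝ f(x)·φ^{(γ)}(x) dx = (−1)^γ Σ_{k=1}^K vₖ·(wₖ^γ/|wₖ|)·φ(bₖ/wₖ). -/
open MeasureTheory

namespace Stmt13Aux

lemma hcs_iter {φ : ℝ → ℝ} (hφc : HasCompactSupport φ) (n : ℕ) :
    HasCompactSupport (iteratedDeriv n φ) := by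
  induction n with
  | zero => simpa using hφc
  | succ n ih => rw [iteratedDeriv_succ]; exact ih.deriv

lemma tsupport_iter {φ : ℝ → ℝ} (n : ℕ) :
    tsupport (iteratedDeriv n φ) ⊆ tsupport φ := by
  induction n with
  | zero => simp [iteratedDeriv_zero]
  | succ n ih =>
    rw [iteratedDeriv_succ]
    exact (closure_minimal support_deriv_subset (isClosed_tsupport _)).trans ih

lemma exists_R {φ : ℝ → ℝ} (hφc : HasCompactSupport φ) :
    ∃ R : ℝ, 0 < R ∧ ∀ n x, x ∉ Set.Ioo (-R) R → iteratedDeriv n φ x = 0 := by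
  obtain ⟨R, hR0, hRs⟩ := hφc.isCompact.isBounded.subset_ball_lt 0 0
  refine ⟨R, hR0, fun n x hx => ?_⟩
  apply image_eq_zero_of_notMem_tsupport
  intro hmem
  have := hRs (tsupport_iter n hmem)
  rw [Real.ball_eq_Ioo] at this
  simp only [zero_sub, zero_add] at this
  exact hx this

lemma hasDerivAt_iter {φ : ℝ → ℝ} (hφ : ContDiff ℝ (⊤ : ℕ∞) φ) (n : ℕ) (x : ℝ) :
    HasDerivAt (iteratedDeriv n φ) (iteratedDeriv (n + 1) φ x) x := by
  rw [iteratedDeriv_succ]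
  exact ((hφ.differentiable_iteratedDeriv n (by exact_mod_cast ENat.coe_lt_top n)) x).hasDerivAt

lemma hasDerivAt_mono (m : ℕ) (x : ℝ) :
    HasDerivAt (fun y : ℝ => y ^ (m + 1) / (Nat.factorial (m + 1) : ℝ))
      (x ^ m / (Nat.factorial m : ℝ)) x := by
  have h := (hasDerivAt_pow (m + 1) x).div_const ((Nat.factorial (m + 1) : ℝ))
  refine h.congr_deriv ?_
  have h0 : (Nat.factorial m : ℝ) ≠ 0 := Nat.cast_ne_zero.2 m.factorial_ne_zero
  rw [Nat.factorial_succ]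
  push_cast
  field_simp

lemma HL1 {φ : ℝ → ℝ} (hφ : ContDiff ℝ (⊤ : ℕ∞) φ) {R : ℝ}
    (hsupp : ∀ n x, x ∉ Set.Ioo (-R) R → iteratedDeriv n φ x = 0) (m : ℕ) :
    ∫ x in (0:ℝ)..R, x ^ m / (Nat.factorial m : ℝ) * iteratedDeriv (m + 1) φ x
      = (-1 : ℝ) ^ (m + 1) * φ 0 := by
  induction m with
  | zero =>
    have h1 : ∫ x in (0:ℝ)..R, deriv φ x = φ R - φ 0 :=
      intervalIntegral.integral_deriv_eq_sub
        (fun x _ => (hφ.differentiable (by simp)) x)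
        ((hφ.continuous_deriv (by simp)).intervalIntegrable _ _)
    have hR0 : φ R = 0 := by
      have := hsupp 0 R (by simp [Set.mem_Ioo])
      simpa using this
    simp only [pow_zero, Nat.factorial_zero, Nat.cast_one, div_one, one_mul, zero_add,
      iteratedDeriv_one]
    rw [h1, hR0]
    ring
  | succ m ih =>
    have hcont : ∀ n : ℕ, Continuous (iteratedDeriv n φ) :=
      fun n => hφ.continuous_iteratedDeriv n (by exact_mod_cast le_top)
    have hpar := intervalIntegral.integral_mul_deriv_eq_deriv_mul
      (u := fun y : ℝ => y ^ (m + 1) / (Nat.factorial (m + 1) : ℝ))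
      (u' := fun y : ℝ => y ^ m / (Nat.factorial m : ℝ))
      (v := iteratedDeriv (m + 1) φ) (v' := iteratedDeriv (m + 2) φ)
      (a := 0) (b := R)
      (fun x _ => hasDerivAt_mono m x)
      (fun x _ => hasDerivAt_iter hφ (m + 1) x)
      (((continuous_pow m).div_const _).intervalIntegrable _ _)
      ((hcont (m + 2)).intervalIntegrable _ _)
    have hvR : iteratedDeriv (m + 1) φ R = 0 := hsupp (m + 1) R (by simp [Set.mem_Ioo])
    rw [hpar, ih, hvR]
    ring

lemma HL2 {φ : ℝ → ℝ} (hφ : ContDiff ℝ (⊤ : ℕ∞) φ) {R : ℝ}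
    (hsupp : ∀ n x, x ∉ Set.Ioo (-R) R → iteratedDeriv n φ x = 0) :
    ∀ n, ∀ j < n, ∫ x in (-R : ℝ)..R, x ^ j * iteratedDeriv n φ x = 0 := by
  have hcont : ∀ n : ℕ, Continuous (iteratedDeriv n φ) :=
    fun n => hφ.continuous_iteratedDeriv n (by exact_mod_cast le_top)
  intro n
  induction n with
  | zero => intro j hj; omega
  | succ n ih =>
    intro j hj
    match j with
    | 0 =>
      have h1 : ∫ x in (-R : ℝ)..R, iteratedDeriv (n + 1) φ x
          = iteratedDeriv n φ R - iteratedDeriv n φ (-R) :=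
        intervalIntegral.integral_eq_sub_of_hasDerivAt
          (fun x _ => hasDerivAt_iter hφ n x)
          ((hcont (n + 1)).intervalIntegrable _ _)
      simp only [pow_zero, one_mul]
      rw [h1, hsupp n R (by simp [Set.mem_Ioo]), hsupp n (-R) (by simp [Set.mem_Ioo])]
      ring
    | (j + 1) =>
      have hpar := intervalIntegral.integral_mul_deriv_eq_deriv_mul
        (u := fun y : ℝ => y ^ (j + 1))
        (u' := fun y : ℝ => ((j : ℝ) + 1) * y ^ j)
        (v := iteratedDeriv n φ) (v' := iteratedDeriv (n + 1) φ)
        (a := -R) (b := R)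
        (fun x _ => by simpa using hasDerivAt_pow (j + 1) x)
        (fun x _ => hasDerivAt_iter hφ n x)
        ((continuous_const.mul (continuous_pow j)).intervalIntegrable _ _)
        ((hcont (n + 1)).intervalIntegrable _ _)
      rw [hpar, hsupp n R (by simp [Set.mem_Ioo]), hsupp n (-R) (by simp [Set.mem_Ioo])]
      have : ∫ x in (-R : ℝ)..R, ((j : ℝ) + 1) * x ^ j * iteratedDeriv n φ x
          = ((j : ℝ) + 1) * ∫ x in (-R : ℝ)..R, x ^ j * iteratedDeriv n φ x := by
        simp_rw [mul_assoc]
        exact intervalIntegral.integral_const_mul _ _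
      rw [this, ih j (by omega)]
      ring

lemma iter_affine {φ : ℝ → ℝ} (hφ : ContDiff ℝ (⊤ : ℕ∞) φ) (c d : ℝ) (n : ℕ) :
    ∀ x : ℝ, iteratedDeriv n (fun y => φ (c * y + d)) x
      = c ^ n * iteratedDeriv n φ (c * x + d) := by
  induction n with
  | zero => intro x; simp
  | succ n ih =>
    intro x
    have hF := hasDerivAt_iter hφ n (c * x + d)
    have haff : HasDerivAt (fun y : ℝ => c * y + d) c x := by
      simpa using ((hasDerivAt_id x).const_mul c).add_const d
    have h2 : HasDerivAt (fun y : ℝ => c ^ n * iteratedDeriv n φ (c * y + d))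
        (c ^ n * (iteratedDeriv (n + 1) φ (c * x + d) * c)) x := by
      have := (hF.comp x haff).const_mul (c ^ n)
      simpa [Function.comp] using this
    have hfe : iteratedDeriv n (fun y => φ (c * y + d))
        = fun y => c ^ n * iteratedDeriv n φ (c * y + d) := funext ih
    rw [iteratedDeriv_succ, hfe, h2.deriv]
    ring

/-- full-line truncated power identity at the origin -/
lemma trunc_int {φ : ℝ → ℝ} (hφ : ContDiff ℝ (⊤ : ℕ∞) φ) (hφc : HasCompactSupport φ)
    {m : ℕ} (hm : 1 ≤ m) :
    ∫ x : ℝ, max 0 x ^ m / (Nat.factorial m : ℝ) * iteratedDeriv (m + 1) φ x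
      = (-1 : ℝ) ^ (m + 1) * φ 0 := by
  obtain ⟨R, hR0, hsupp⟩ := exists_R hφc
  have hzero : ∀ x : ℝ, x ∉ Set.Ioc (0 : ℝ) R →
      max 0 x ^ m / (Nat.factorial m : ℝ) * iteratedDeriv (m + 1) φ x = 0 := by
    intro x hx
    rcases le_or_gt x 0 with h | h
    · rw [max_eq_left h, zero_pow (by omega), zero_div, zero_mul]
    · have hxR : R < x := by
        by_contra hc
        exact hx ⟨h, le_of_not_gt hc⟩
      rw [hsupp (m + 1) x (by simp [Set.mem_Ioo]; intro _; linarith), mul_zero]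
  have h1 : ∫ x : ℝ, max 0 x ^ m / (Nat.factorial m : ℝ) * iteratedDeriv (m + 1) φ x
      = ∫ x in Set.Ioc (0 : ℝ) R,
          max 0 x ^ m / (Nat.factorial m : ℝ) * iteratedDeriv (m + 1) φ x :=
    (setIntegral_eq_integral_of_forall_compl_eq_zero hzero).symm
  rw [h1, ← intervalIntegral.integral_of_le hR0.le]
  have h2 : ∫ x in (0:ℝ)..R, max 0 x ^ m / (Nat.factorial m : ℝ) * iteratedDeriv (m + 1) φ x
      = ∫ x in (0:ℝ)..R, x ^ m / (Nat.factorial m : ℝ) * iteratedDeriv (m + 1) φ x := by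
    apply intervalIntegral.integral_congr
    intro x hx
    rw [Set.uIcc_of_le hR0.le] at hx
    simp only [max_eq_right hx.1]
  rw [h2]
  exact HL1 hφ hsupp m

/-- full-line polynomial annihilation -/
lemma poly_int {φ : ℝ → ℝ} (hφ : ContDiff ℝ (⊤ : ℕ∞) φ) (hφc : HasCompactSupport φ)
    {n j : ℕ} (hj : j < n) : ∫ x : ℝ, x ^ j * iteratedDeriv n φ x = 0 := by
  obtain ⟨R, hR0, hsupp⟩ := exists_R hφc
  have hzero : ∀ x : ℝ, x ∉ Set.Ioc (-R : ℝ) R → x ^ j * iteratedDeriv n φ x = 0 := by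
    intro x hx
    rw [hsupp n x (fun hmem => hx ⟨hmem.1, hmem.2.le⟩), mul_zero]
  have h1 : ∫ x : ℝ, x ^ j * iteratedDeriv n φ x
      = ∫ x in Set.Ioc (-R : ℝ) R, x ^ j * iteratedDeriv n φ x :=
    (setIntegral_eq_integral_of_forall_compl_eq_zero hzero).symm
  rw [h1, ← intervalIntegral.integral_of_le (by linarith : (-R : ℝ) ≤ R)]
  exact HL2 hφ hsupp n j hj

/-- the per-neuron identity -/
lemma key {φ : ℝ → ℝ} (hφ : ContDiff ℝ (⊤ : ℕ∞) φ) (hφc : HasCompactSupport φ)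
    {γ : ℕ} (hγ : 2 ≤ γ) {w : ℝ} (b : ℝ) (hw : w ≠ 0) :
    ∫ x : ℝ, max 0 (w * x - b) ^ (γ - 1) / (Nat.factorial (γ - 1) : ℝ) * iteratedDeriv γ φ x
      = (-1 : ℝ) ^ γ * (w ^ γ / |w|) * φ (b / w) := by
  set ψ : ℝ → ℝ := fun y => φ (w⁻¹ * y + b / w) with hψdef
  have hψ : ContDiff ℝ (⊤ : ℕ∞) ψ :=
    hφ.comp ((contDiff_const.mul contDiff_id).add contDiff_const)
  have hψc : HasCompactSupport ψ := by
    let e : ℝ ≃ₜ ℝ :=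
      (Homeomorph.mulLeft₀ w⁻¹ (inv_ne_zero hw)).trans (Homeomorph.addRight (b / w))
    have he : ψ = φ ∘ e := by
      funext y
      simp [e, ψ, Homeomorph.trans_apply, Homeomorph.mulLeft₀]
      rfl
    rw [he]
    exact hφc.comp_homeomorph e
  -- relate iterated derivatives
  have hrel : ∀ x : ℝ, iteratedDeriv γ φ x = w ^ γ * iteratedDeriv γ ψ (w * x - b) := by
    intro x
    have h := iter_affine hφ w⁻¹ (b / w) γ (w * x - b)
    have harg : w⁻¹ * (w * x - b) + b / w = x := by field_simp; ring
    rw [harg] at h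
    have : iteratedDeriv γ ψ (w * x - b) = (w⁻¹) ^ γ * iteratedDeriv γ φ x := h
    rw [this]
    field_simp
    rw [one_div_pow, mul_assoc, mul_one_div_cancel (pow_ne_zero _ hw), mul_one]
  have hstep : ∫ x : ℝ,
      max 0 (w * x - b) ^ (γ - 1) / (Nat.factorial (γ - 1) : ℝ) * iteratedDeriv γ φ x
      = w ^ γ * ∫ x : ℝ,
          (fun y => max 0 y ^ (γ - 1) / (Nat.factorial (γ - 1) : ℝ) * iteratedDeriv γ ψ y)
            (w * x - b) := by
    rw [← integral_const_mul]
    congr 1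
    funext x
    rw [hrel x]
    ring
  rw [hstep]
  have hsub : ∀ x : ℝ, w * x - b = w * x - b := fun _ => rfl
  have hG : ∫ x : ℝ,
      (fun y => max 0 y ^ (γ - 1) / (Nat.factorial (γ - 1) : ℝ) * iteratedDeriv γ ψ y)
        (w * x - b)
      = |w⁻¹| * ∫ y : ℝ, max 0 y ^ (γ - 1) / (Nat.factorial (γ - 1) : ℝ)
          * iteratedDeriv γ ψ y := by
    have h1 : (fun x : ℝ =>
        (fun y => max 0 y ^ (γ - 1) / (Nat.factorial (γ - 1) : ℝ) * iteratedDeriv γ ψ y)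
          (w * x - b))
        = fun x : ℝ =>
        (fun y => max 0 (y - b) ^ (γ - 1) / (Nat.factorial (γ - 1) : ℝ)
          * iteratedDeriv γ ψ (y - b)) (w * x) := by
      funext x; rfl
    rw [h1, MeasureTheory.Measure.integral_comp_mul_left
      (fun y => max 0 (y - b) ^ (γ - 1) / (Nat.factorial (γ - 1) : ℝ)
        * iteratedDeriv γ ψ (y - b)) w]
    rw [smul_eq_mul]
    congr 1
    exact integral_sub_right_eq_self
      (fun y => max 0 y ^ (γ - 1) / (Nat.factorial (γ - 1) : ℝ) * iteratedDeriv γ ψ y) b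
  rw [hG]
  have hm : 1 ≤ γ - 1 := by omega
  have hγ1 : γ - 1 + 1 = γ := by omega
  have hT : ∫ y : ℝ, max 0 y ^ (γ - 1) / (Nat.factorial (γ - 1) : ℝ) * iteratedDeriv γ ψ y
      = (-1 : ℝ) ^ γ * ψ 0 := by
    have := trunc_int hψ hψc hm
    rw [hγ1] at this
    rw [this]
  rw [hT]
  have hψ0 : ψ 0 = φ (b / w) := by simp [ψ]
  rw [hψ0, abs_inv]
  have : |w| ≠ 0 := abs_ne_zero.mpr hw
  field_simp

end Stmt13Aux

open Stmt13Aux in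
/-- A truncated-power network of order `γ` with polynomial bias of degree `< γ` is a
`γ`-th order spline: `D^γ f = Σₖ vₖ (wₖ^γ/|wₖ|) δ(· − bₖ/wₖ)` distributionally, i.e.
`∫ f·φ^(γ) = (−1)^γ Σₖ vₖ (wₖ^γ/|wₖ|) φ(bₖ/wₖ)` for every smooth compactly
supported test function `φ`. -/
theorem stmt_13 (γ : ℕ) (hγ : 2 ≤ γ) (K : ℕ) (v w b : Fin K → ℝ)
    (hw : ∀ k, w k ≠ 0) (a : ℕ → ℝ)
    (f : ℝ → ℝ)
    (hf : ∀ x : ℝ, f x =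
      (∑ k, v k * max 0 (w k * x - b k) ^ (γ - 1) / (Nat.factorial (γ - 1) : ℝ))
        + ∑ j ∈ Finset.range γ, a j * x ^ j) :
    ∀ φ : ℝ → ℝ, ContDiff ℝ (⊤ : ℕ∞) φ → HasCompactSupport φ →
      ∫ x : ℝ, f x * iteratedDeriv γ φ x
        = (-1 : ℝ) ^ γ * ∑ k, v k * (w k ^ γ / |w k|) * φ (b k / w k) := by
  intro φ hφ hφc
  have hD : Continuous (iteratedDeriv γ φ) := hφ.continuous_iteratedDeriv γ (by exact_mod_cast le_top)
  have hDc : HasCompactSupport (iteratedDeriv γ φ) := hcs_iter hφc γ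
  have hint : ∀ g : ℝ → ℝ, Continuous g →
      Integrable (fun x => g x * iteratedDeriv γ φ x) := fun g hg =>
    ((hg.mul hD).integrable_of_hasCompactSupport (hDc.mul_left))
  have hcontk : ∀ k : Fin K, Continuous
      (fun x : ℝ => v k * max 0 (w k * x - b k) ^ (γ - 1) / (Nat.factorial (γ - 1) : ℝ)) := by
    intro k
    fun_prop
  have hintk : ∀ k : Fin K, Integrable (fun x : ℝ =>
      v k * max 0 (w k * x - b k) ^ (γ - 1) / (Nat.factorial (γ - 1) : ℝ)
        * iteratedDeriv γ φ x) := fun k => hint _ (hcontk k)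
  have hintj : ∀ j : ℕ, Integrable (fun x : ℝ => a j * x ^ j * iteratedDeriv γ φ x) :=
    fun j => hint _ (by fun_prop)
  have hsplit : ∫ x : ℝ, f x * iteratedDeriv γ φ x
      = (∑ k, ∫ x : ℝ, v k * max 0 (w k * x - b k) ^ (γ - 1)
            / (Nat.factorial (γ - 1) : ℝ) * iteratedDeriv γ φ x)
        + ∑ j ∈ Finset.range γ, ∫ x : ℝ, a j * x ^ j * iteratedDeriv γ φ x := by
    rw [← integral_finset_sum _ (fun k _ => hintk k),
      ← integral_finset_sum _ (fun j _ => hintj j),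
      ← integral_add (integrable_finset_sum _ (fun k _ => hintk k))
        (integrable_finset_sum _ (fun j _ => hintj j))]
    congr 1
    funext x
    rw [hf x]
    rw [add_mul, Finset.sum_mul, Finset.sum_mul]
  rw [hsplit]
  have hpoly : ∀ j ∈ Finset.range γ, (∫ x : ℝ, a j * x ^ j * iteratedDeriv γ φ x) = 0 := by
    intro j hj
    have : (fun x : ℝ => a j * x ^ j * iteratedDeriv γ φ x)
        = fun x : ℝ => a j * (x ^ j * iteratedDeriv γ φ x) := by funext x; ring
    rw [this, integral_const_mul, poly_int hφ hφc (Finset.mem_range.mp hj), mul_zero]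
  rw [Finset.sum_eq_zero hpoly, add_zero]
  have hterm : ∀ k : Fin K, (∫ x : ℝ, v k * max 0 (w k * x - b k) ^ (γ - 1)
      / (Nat.factorial (γ - 1) : ℝ) * iteratedDeriv γ φ x)
      = v k * ((-1 : ℝ) ^ γ * (w k ^ γ / |w k|) * φ (b k / w k)) := by
    intro k
    have : (fun x : ℝ => v k * max 0 (w k * x - b k) ^ (γ - 1)
        / (Nat.factorial (γ - 1) : ℝ) * iteratedDeriv γ φ x)
        = fun x : ℝ => v k * (max 0 (w k * x - b k) ^ (γ - 1)
          / (Nat.factorial (γ - 1) : ℝ) * iteratedDeriv γ φ x) := by funext x; ring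
    rw [this, integral_const_mul, key hφ hφc hγ (b k) (hw k)]
  rw [Finset.sum_congr rfl (fun k _ => hterm k), Finset.mul_sum]
  congr 1
  funext k
  ring
end

section
/- Let γ ≥ 2 be an integer and let f be the network f(x) = Σ_{k=1}^K vₖ·max{0, wₖx − bₖ}^(γ−1)/(γ−1)! + c(x) with wₖ ≠ 0, deg c ≤ γ−1, and all knots bₖ/wₖ distinct. Then the total-variation norm of the measure D^γ f equals Σ_{k=1}^K |vₖ|·|wₖ|^(γ−1). -/
open MeasureTheory Set Filter
open scoped ENNReal NNReal
private lemma cs_tendsto_top {F : ℝ → ℝ} (hF : HasCompactSupport F) :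
    Tendsto F atTop (nhds 0) := by
  rw [hasCompactSupport_iff_eventuallyEq, Filter.coclosedCompact_eq_cocompact] at hF
  exact (hF.filter_mono atTop_le_cocompact).tendsto

private lemma cs_tendsto_bot {F : ℝ → ℝ} (hF : HasCompactSupport F) :
    Tendsto F atBot (nhds 0) := by
  rw [hasCompactSupport_iff_eventuallyEq, Filter.coclosedCompact_eq_cocompact] at hF
  exact (hF.filter_mono atBot_le_cocompact).tendsto

private lemma cs_iter {φ : ℝ → ℝ} (hs : HasCompactSupport φ) (m : ℕ) :
    HasCompactSupport (iteratedDeriv m φ) := by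
  induction m with
  | zero => simpa [iteratedDeriv_zero] using hs
  | succ m ih => rw [iteratedDeriv_succ]; exact ih.deriv

private lemma cont_iter {φ : ℝ → ℝ} (hφ : ContDiff ℝ (⊤ : ℕ∞) φ) (m : ℕ) :
    Continuous (iteratedDeriv m φ) :=
  hφ.continuous_iteratedDeriv m (by exact_mod_cast le_top)

private lemma hda_iter {φ : ℝ → ℝ} (hφ : ContDiff ℝ (⊤ : ℕ∞) φ) (m : ℕ) (x : ℝ) :
    HasDerivAt (iteratedDeriv m φ) (iteratedDeriv (m + 1) φ x) x := by
  rw [iteratedDeriv_succ]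
  exact (hφ.differentiable_iteratedDeriv m (by
    exact_mod_cast lt_top_iff_ne_top.2 (by simp)) x).hasDerivAt

private lemma cs_pmul {ψ : ℝ → ℝ} (hψc : Continuous ψ) (hψs : HasCompactSupport ψ)
    {g : ℝ → ℝ} (hg : Continuous g) :
    Continuous (fun x => g x * ψ x) ∧ HasCompactSupport (fun x => g x * ψ x) ∧
      Integrable (fun x => g x * ψ x) := by
  have hc : Continuous (fun x => g x * ψ x) := hg.mul hψc
  have hcs : HasCompactSupport (fun x => g x * ψ x) := hψs.mul_left
  exact ⟨hc, hcs, hc.integrable_of_hasCompactSupport hcs⟩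

private lemma key_Ioi {φ : ℝ → ℝ} (hφ : ContDiff ℝ (⊤ : ℕ∞) φ) (hs : HasCompactSupport φ) (t : ℝ) :
    ∀ n : ℕ, ∫ x in Ioi t, (x - t) ^ n * iteratedDeriv (n + 1) φ x
      = (-1 : ℝ) ^ (n + 1) * (Nat.factorial n) * φ t := by
  intro n
  induction n with
  | zero =>
    simp only [zero_add, pow_zero, one_mul, iteratedDeriv_one, Nat.factorial_zero, Nat.cast_one,
      mul_one, pow_one]
    rw [HasCompactSupport.integral_Ioi_deriv_eq (hφ.of_le (by simp)) hs t]
    ring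
  | succ n ih =>
    set ψ := iteratedDeriv (n + 1) φ with hψ
    have hψc : Continuous ψ := cont_iter hφ (n + 1)
    have hψs : HasCompactSupport ψ := cs_iter hs (n + 1)
    have hψ'c : Continuous (iteratedDeriv (n + 2) φ) := cont_iter hφ (n + 2)
    have hψ's : HasCompactSupport (iteratedDeriv (n + 2) φ) := cs_iter hs (n + 2)
    set F : ℝ → ℝ := fun x => (x - t) ^ (n + 1) * ψ x with hF
    set G1 : ℝ → ℝ := fun x => ((n : ℝ) + 1) * (x - t) ^ n * ψ x with hG1
    set G2 : ℝ → ℝ := fun x => (x - t) ^ (n + 1) * iteratedDeriv (n + 2) φ x with hG2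
    have hg1 := cs_pmul hψc hψs (g := fun x => ((n : ℝ) + 1) * (x - t) ^ n)
      (by continuity)
    have hg2 := cs_pmul hψ'c hψ's (g := fun x => (x - t) ^ (n + 1)) (by continuity)
    have hFprop := cs_pmul hψc hψs (g := fun x => (x - t) ^ (n + 1)) (by continuity)
    have hd : ∀ x : ℝ, HasDerivAt F (G1 x + G2 x) x := by
      intro x
      have h1 : HasDerivAt (fun x : ℝ => (x - t) ^ (n + 1))
          (((n : ℝ) + 1) * (x - t) ^ n) x := by
        have := ((hasDerivAt_id x).sub_const t).pow (n + 1)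
        simpa [Pi.pow_def] using this
      have := h1.mul (hda_iter hφ (n + 1) x)
      simpa [hG1, hG2, hψ, hF, Pi.mul_def] using this
    have hint : ∫ x in Ioi t, (G1 x + G2 x) = 0 - F t := by
      apply integral_Ioi_of_hasDerivAt_of_tendsto hFprop.1.continuousWithinAt
        (fun x _ => hd x) ((hg1.2.2.add hg2.2.2).integrableOn)
      exact cs_tendsto_top hFprop.2.1
    have hFt : F t = 0 := by simp [hF]
    rw [integral_add hg1.2.2.integrableOn hg2.2.2.integrableOn, hFt, sub_zero] at hint
    have hG1int : ∫ x in Ioi t, G1 x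
        = ((n : ℝ) + 1) * ((-1 : ℝ) ^ (n + 1) * (Nat.factorial n) * φ t) := by
      rw [← ih, ← integral_const_mul]
      congr 1 with x
      simp [hG1, hψ]; ring
    have : ∫ x in Ioi t, G2 x = -((n : ℝ) + 1) * ((-1 : ℝ) ^ (n + 1) * (Nat.factorial n) * φ t) := by
      have := hint
      rw [hG1int] at this
      linarith
    rw [show (fun x => (x - t) ^ (n + 1) * iteratedDeriv (n + 1 + 1) φ x) = G2 from rfl] at *
    rw [this, Nat.factorial_succ]
    push_cast
    ring

private lemma key_Iic {φ : ℝ → ℝ} (hφ : ContDiff ℝ (⊤ : ℕ∞) φ) (hs : HasCompactSupport φ) (t : ℝ) :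
    ∀ n : ℕ, ∫ x in Iic t, (x - t) ^ n * iteratedDeriv (n + 1) φ x
      = (-1 : ℝ) ^ n * (Nat.factorial n) * φ t := by
  intro n
  induction n with
  | zero =>
    simp only [zero_add, pow_zero, one_mul, iteratedDeriv_one, Nat.factorial_zero, Nat.cast_one,
      mul_one, pow_one]
    rw [HasCompactSupport.integral_Iic_deriv_eq (hφ.of_le (by simp)) hs t]
  | succ n ih =>
    set ψ := iteratedDeriv (n + 1) φ with hψ
    have hψc : Continuous ψ := cont_iter hφ (n + 1)
    have hψs : HasCompactSupport ψ := cs_iter hs (n + 1)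
    have hψ'c : Continuous (iteratedDeriv (n + 2) φ) := cont_iter hφ (n + 2)
    have hψ's : HasCompactSupport (iteratedDeriv (n + 2) φ) := cs_iter hs (n + 2)
    set F : ℝ → ℝ := fun x => (x - t) ^ (n + 1) * ψ x with hF
    set G1 : ℝ → ℝ := fun x => ((n : ℝ) + 1) * (x - t) ^ n * ψ x with hG1
    set G2 : ℝ → ℝ := fun x => (x - t) ^ (n + 1) * iteratedDeriv (n + 2) φ x with hG2
    have hg1 := cs_pmul hψc hψs (g := fun x => ((n : ℝ) + 1) * (x - t) ^ n)
      (by continuity)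
    have hg2 := cs_pmul hψ'c hψ's (g := fun x => (x - t) ^ (n + 1)) (by continuity)
    have hFprop := cs_pmul hψc hψs (g := fun x => (x - t) ^ (n + 1)) (by continuity)
    have hd : ∀ x : ℝ, HasDerivAt F (G1 x + G2 x) x := by
      intro x
      have h1 : HasDerivAt (fun x : ℝ => (x - t) ^ (n + 1))
          (((n : ℝ) + 1) * (x - t) ^ n) x := by
        have := ((hasDerivAt_id x).sub_const t).pow (n + 1)
        simpa [Pi.pow_def] using this
      have := h1.mul (hda_iter hφ (n + 1) x)
      simpa [hG1, hG2, hψ, hF, Pi.mul_def] using this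
    have hint : ∫ x in Iic t, (G1 x + G2 x) = F t - 0 := by
      apply integral_Iic_of_hasDerivAt_of_tendsto hFprop.1.continuousWithinAt
        (fun x _ => hd x) ((hg1.2.2.add hg2.2.2).integrableOn)
      exact cs_tendsto_bot hFprop.2.1
    have hFt : F t = 0 := by simp [hF]
    rw [integral_add hg1.2.2.integrableOn hg2.2.2.integrableOn, hFt, zero_sub, neg_zero] at hint
    have hG1int : ∫ x in Iic t, G1 x
        = ((n : ℝ) + 1) * ((-1 : ℝ) ^ n * (Nat.factorial n) * φ t) := by
      rw [← ih, ← integral_const_mul]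
      congr 1 with x
      simp [hG1, hψ]; ring
    have : ∫ x in Iic t, G2 x = -((n : ℝ) + 1) * ((-1 : ℝ) ^ n * (Nat.factorial n) * φ t) := by
      have := hint
      rw [hG1int] at this
      linarith
    rw [show (fun x => (x - t) ^ (n + 1) * iteratedDeriv (n + 1 + 1) φ x) = G2 from rfl] at *
    rw [this, Nat.factorial_succ]
    push_cast
    ring

private lemma int_deriv_zero {F F' : ℝ → ℝ} (hd : ∀ x, HasDerivAt F (F' x) x)
    (hFcont : Continuous F) (hFc : HasCompactSupport F)
    (hF'cont : Continuous F') (hF's : HasCompactSupport F') :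
    ∫ x : ℝ, F' x = 0 := by
  have hint : Integrable F' := hF'cont.integrable_of_hasCompactSupport hF's
  rw [← intervalIntegral.integral_Iic_add_Ioi (b := 0) hint.integrableOn hint.integrableOn]
  rw [integral_Iic_of_hasDerivAt_of_tendsto hFcont.continuousWithinAt (fun x _ => hd x)
      hint.integrableOn (cs_tendsto_bot hFc),
    integral_Ioi_of_hasDerivAt_of_tendsto hFcont.continuousWithinAt (fun x _ => hd x)
      hint.integrableOn (cs_tendsto_top hFc)]
  ring

private lemma key_poly {φ : ℝ → ℝ} (hφ : ContDiff ℝ (⊤ : ℕ∞) φ) (hs : HasCompactSupport φ) :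
    ∀ (j m : ℕ), j < m → ∫ x : ℝ, x ^ j * iteratedDeriv m φ x = 0 := by
  intro j
  induction j with
  | zero =>
    intro m hm
    obtain ⟨m, rfl⟩ := Nat.exists_eq_add_of_lt hm
    simp only [zero_add, pow_zero, one_mul]
    exact int_deriv_zero (hda_iter hφ m) (cont_iter hφ m) (cs_iter hs m)
      (cont_iter hφ (m + 1)) (cs_iter hs (m + 1))
  | succ j ih =>
    intro m hm
    obtain ⟨m', rfl⟩ := Nat.exists_eq_add_of_lt hm
    set m := j + 1 + m' with hmdef
    have hm1 : j < m := by omega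
    set ψ := iteratedDeriv m φ with hψ
    have hψc : Continuous ψ := cont_iter hφ m
    have hψs : HasCompactSupport ψ := cs_iter hs m
    have hψ'c : Continuous (iteratedDeriv (m + 1) φ) := cont_iter hφ (m + 1)
    have hψ's : HasCompactSupport (iteratedDeriv (m + 1) φ) := cs_iter hs (m + 1)
    set F : ℝ → ℝ := fun x => x ^ (j + 1) * ψ x with hF
    set G1 : ℝ → ℝ := fun x => ((j : ℝ) + 1) * x ^ j * ψ x with hG1
    set G2 : ℝ → ℝ := fun x => x ^ (j + 1) * iteratedDeriv (m + 1) φ x with hG2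
    have hg1 := cs_pmul hψc hψs (g := fun x => ((j : ℝ) + 1) * x ^ j) (by continuity)
    have hg2 := cs_pmul hψ'c hψ's (g := fun x => x ^ (j + 1)) (by continuity)
    have hFprop := cs_pmul hψc hψs (g := fun x => x ^ (j + 1)) (by continuity)
    have hd : ∀ x : ℝ, HasDerivAt F (G1 x + G2 x) x := by
      intro x
      have h1 : HasDerivAt (fun x : ℝ => x ^ (j + 1)) (((j : ℝ) + 1) * x ^ j) x := by
        have := (hasDerivAt_id x).pow (j + 1)
        simpa [Pi.pow_def] using this
      have := h1.mul (hda_iter hφ m x)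
      simpa [hG1, hG2, hψ, hF, Pi.mul_def] using this
    have hzero : ∫ x : ℝ, (G1 x + G2 x) = 0 :=
      int_deriv_zero hd hFprop.1 hFprop.2.1 (hg1.1.add hg2.1) (hg1.2.1.add hg2.2.1)
    rw [integral_add hg1.2.2 hg2.2.2] at hzero
    have hG1int : ∫ x : ℝ, G1 x = 0 := by
      have := ih m hm1
      rw [← hψ] at this
      calc ∫ x : ℝ, G1 x = ((j:ℝ)+1) * ∫ x : ℝ, x ^ j * ψ x := by
            rw [← integral_const_mul]; congr 1 with x; simp [hG1]; ring
        _ = 0 := by rw [this, mul_zero]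
    have : ∫ x : ℝ, G2 x = 0 := by linarith
    exact this

private lemma term_eval {φ : ℝ → ℝ} (hφ : ContDiff ℝ (⊤ : ℕ∞) φ) (hs : HasCompactSupport φ)
    (m : ℕ) (hm : 1 ≤ m) (v w b : ℝ) (hw : w ≠ 0) :
    ∫ x : ℝ, v * max 0 (w * x - b) ^ m / (Nat.factorial m : ℝ) * iteratedDeriv (m + 1) φ x
      = (-1 : ℝ) ^ (m + 1) * (v * (w ^ (m + 1) / |w|)) * φ (b / w) := by
  set t := b / w with ht
  have hwt : w * t = b := by rw [ht]; field_simp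
  have hψc : Continuous (iteratedDeriv (m + 1) φ) := cont_iter hφ (m + 1)
  have hψs : HasCompactSupport (iteratedDeriv (m + 1) φ) := cs_iter hs (m + 1)
  have hfac : (Nat.factorial m : ℝ) ≠ 0 := Nat.cast_ne_zero.mpr (Nat.factorial_ne_zero m)
  rcases hw.lt_or_gt with hneg | hpos
  · -- w < 0 : support in Iic t
    have habs : |w| = -w := abs_of_neg hneg
    have hzero : ∀ x ∉ Iic t, v * max 0 (w * x - b) ^ m / (Nat.factorial m : ℝ)
        * iteratedDeriv (m + 1) φ x = 0 := by
      intro x hx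
      rw [mem_Iic, not_le] at hx
      have : w * x - b < 0 := by nlinarith
      rw [max_eq_left this.le, zero_pow (by omega), mul_zero, zero_div, zero_mul]
    rw [← setIntegral_eq_integral_of_forall_compl_eq_zero hzero]
    have hcongr : ∀ x ∈ Iic t, v * max 0 (w * x - b) ^ m / (Nat.factorial m : ℝ)
        * iteratedDeriv (m + 1) φ x
        = (v * w ^ m / (Nat.factorial m : ℝ)) * ((x - t) ^ m * iteratedDeriv (m + 1) φ x) := by
      intro x hx
      rw [mem_Iic] at hx
      have h1 : w * x - b = w * (x - t) := by rw [← hwt]; ring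
      have h2 : 0 ≤ w * (x - t) := by nlinarith
      rw [h1, max_eq_right h2, mul_pow]
      ring
    rw [setIntegral_congr_fun measurableSet_Iic hcongr, integral_const_mul,
      key_Iic hφ hs t m, habs]
    rw [pow_succ (-1 : ℝ) m]
    field_simp
    ring
  · -- w > 0 : support in Ioi t
    have habs : |w| = w := abs_of_pos hpos
    have hzero : ∀ x ∉ Ioi t, v * max 0 (w * x - b) ^ m / (Nat.factorial m : ℝ)
        * iteratedDeriv (m + 1) φ x = 0 := by
      intro x hx
      rw [mem_Ioi, not_lt] at hx
      have : w * x - b ≤ 0 := by nlinarith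
      rw [max_eq_left this, zero_pow (by omega), mul_zero, zero_div, zero_mul]
    rw [← setIntegral_eq_integral_of_forall_compl_eq_zero hzero]
    have hcongr : ∀ x ∈ Ioi t, v * max 0 (w * x - b) ^ m / (Nat.factorial m : ℝ)
        * iteratedDeriv (m + 1) φ x
        = (v * w ^ m / (Nat.factorial m : ℝ)) * ((x - t) ^ m * iteratedDeriv (m + 1) φ x) := by
      intro x hx
      rw [mem_Ioi] at hx
      have h1 : w * x - b = w * (x - t) := by rw [← hwt]; ring
      have h2 : 0 ≤ w * (x - t) := by nlinarith
      rw [h1, max_eq_right h2, mul_pow]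
      ring
    rw [setIntegral_congr_fun measurableSet_Ioi hcongr, integral_const_mul,
      key_Ioi hφ hs t m, habs]
    have hwm : w ^ (m + 1) / w = w ^ m := by
      rw [pow_succ]; field_simp
    rw [hwm]
    field_simp

private lemma vm_sum_apply {ι : Type*} (s : Finset ι) (f : ι → SignedMeasure ℝ) (i : Set ℝ) :
    (∑ k ∈ s, f k) i = ∑ k ∈ s, f k i := by
  classical
  induction s using Finset.induction with
  | empty => simp [MeasureTheory.VectorMeasure.zero_apply]
  | insert _ _ h ih =>
    rw [Finset.sum_insert h, VectorMeasure.add_apply, ih, Finset.sum_insert h]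

private lemma tv_diracs (K : ℕ) (c t : Fin K → ℝ)
    (ht : ∀ j k, j ≠ k → t j ≠ t k) :
    ((∑ k, (c k) • (Measure.dirac (t k)).toSignedMeasure : SignedMeasure ℝ)).totalVariation
      Set.univ = ENNReal.ofReal (∑ k, |c k|) := by
  classical
  set P : Measure ℝ := ∑ k, ((c k).toNNReal : ℝ≥0∞) • Measure.dirac (t k) with hP
  set N : Measure ℝ := ∑ k, ((-c k).toNNReal : ℝ≥0∞) • Measure.dirac (t k) with hN
  have hPapp : ∀ i : Set ℝ, MeasurableSet i →
      P i = ∑ k, ((c k).toNNReal : ℝ≥0∞) * (if t k ∈ i then 1 else 0) := by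
    intro i hi
    rw [hP, Measure.finset_sum_apply]
    refine Finset.sum_congr rfl fun k _ => ?_
    rw [Measure.smul_apply, Measure.dirac_apply' _ hi, smul_eq_mul, Set.indicator_apply]
    simp
  have hNapp : ∀ i : Set ℝ, MeasurableSet i →
      N i = ∑ k, ((-c k).toNNReal : ℝ≥0∞) * (if t k ∈ i then 1 else 0) := by
    intro i hi
    rw [hN, Measure.finset_sum_apply]
    refine Finset.sum_congr rfl fun k _ => ?_
    rw [Measure.smul_apply, Measure.dirac_apply' _ hi, smul_eq_mul, Set.indicator_apply]
    simp
  have hfin : ∀ (d : Fin K → ℝ) (i : Set ℝ),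
      (∑ k, ((d k).toNNReal : ℝ≥0∞) * (if t k ∈ i then 1 else 0)) ≠ ⊤ := by
    intro d i
    refine (ENNReal.sum_lt_top.mpr fun k _ => ?_).ne
    split <;> simp [ENNReal.mul_lt_top, ENNReal.coe_lt_top]
  haveI hPfin : IsFiniteMeasure P := by
    constructor
    rw [hPapp Set.univ MeasurableSet.univ]
    exact (hfin c Set.univ).lt_top
  haveI hNfin : IsFiniteMeasure N := by
    constructor
    rw [hNapp Set.univ MeasurableSet.univ]
    exact (hfin (fun k => -c k) Set.univ).lt_top
  -- mutual singularity
  set S : Finset ℝ := (Finset.univ.filter (fun k => 0 ≤ c k)).image t with hS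
  have hsing : P ⟂ₘ N := by
    refine ⟨(↑S : Set ℝ)ᶜ, S.measurableSet.compl, ?_, ?_⟩
    · rw [hPapp _ S.measurableSet.compl]
      refine Finset.sum_eq_zero fun k _ => ?_
      by_cases hc : 0 ≤ c k
      · have : t k ∈ (↑S : Set ℝ) := by
          simp only [hS, Finset.coe_image, Set.mem_image, Finset.mem_coe, Finset.mem_filter]
          exact ⟨k, by simp [hc], rfl⟩
        simp [this]
      · simp [Real.toNNReal_of_nonpos (le_of_not_ge hc)]
    · rw [compl_compl, hNapp _ S.measurableSet]
      refine Finset.sum_eq_zero fun k _ => ?_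
      by_cases hmem : t k ∈ (↑S : Set ℝ)
      · have hc : 0 ≤ c k := by
          simp only [hS, Finset.coe_image, Set.mem_image, Finset.mem_coe,
            Finset.mem_filter] at hmem
          obtain ⟨j, hj, hjk⟩ := hmem
          rcases eq_or_ne j k with rfl | hne
          · exact hj.2
          · exact absurd hjk (ht j k hne)
        simp [Real.toNNReal_of_nonpos (neg_nonpos.mpr hc)]
      · simp [hmem]
  set J : JordanDecomposition ℝ := ⟨P, N, hsing⟩ with hJ
  have hμJ : (∑ k, (c k) • (Measure.dirac (t k)).toSignedMeasure : SignedMeasure ℝ)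
      = J.toSignedMeasure := by
    refine VectorMeasure.ext fun i hi => ?_
    rw [vm_sum_apply]
    rw [show J.toSignedMeasure = P.toSignedMeasure - N.toSignedMeasure from rfl,
      VectorMeasure.sub_apply, Measure.toSignedMeasure_apply_measurable hi,
      Measure.toSignedMeasure_apply_measurable hi, measureReal_def, measureReal_def, hPapp i hi, hNapp i hi,
      ENNReal.toReal_sum (fun k _ => by split <;> simp),
      ENNReal.toReal_sum (fun k _ => by split <;> simp), ← Finset.sum_sub_distrib]
    refine Finset.sum_congr rfl fun k _ => ?_
    rw [VectorMeasure.smul_apply, Measure.toSignedMeasure_apply_measurable hi, measureReal_def,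
      Measure.dirac_apply' _ hi, Set.indicator_apply]
    rcases le_total 0 (c k) with hc | hc
    · simp only [ENNReal.toReal_mul, ENNReal.coe_toReal, Real.coe_toNNReal _ hc,
        Real.toNNReal_of_nonpos (neg_nonpos.mpr hc)]
      split <;> simp
    · simp only [ENNReal.toReal_mul, ENNReal.coe_toReal,
        Real.toNNReal_of_nonpos hc, Real.coe_toNNReal _ (neg_nonneg.mpr hc)]
      split <;> simp
  rw [SignedMeasure.totalVariation, SignedMeasure.toJordanDecomposition_eq hμJ]
  rw [show J.posPart = P from rfl, show J.negPart = N from rfl]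
  rw [Measure.add_apply, hPapp _ MeasurableSet.univ, hNapp _ MeasurableSet.univ]
  simp only [Set.mem_univ, if_true, mul_one]
  rw [← Finset.sum_add_distrib]
  rw [ENNReal.ofReal_sum_of_nonneg (fun k _ => abs_nonneg (c k))]
  refine Finset.sum_congr rfl fun k _ => ?_
  rcases le_total 0 (c k) with hc | hc
  · rw [abs_of_nonneg hc, Real.toNNReal_of_nonpos (neg_nonpos.mpr hc)]
    simp [ENNReal.ofReal]
  · rw [abs_of_nonpos hc, Real.toNNReal_of_nonpos hc]
    simp [ENNReal.ofReal]

/-- For a truncated-power network of order `γ` with distinct knots, the `γ`-th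
distributional derivative is the signed measure `μ = Σₖ vₖ (wₖ^γ/|wₖ|) δ_{bₖ/wₖ}`
(in the sense that `∫ f·φ^(γ) = (−1)^γ ∫ φ dμ` for test functions), and its
total-variation norm equals the path-norm `Σₖ |vₖ|·|wₖ|^(γ−1)`. -/
theorem stmt_14 (γ : ℕ) (hγ : 2 ≤ γ) (K : ℕ) (v w b : Fin K → ℝ)
    (hw : ∀ k, w k ≠ 0)
    (hknots : ∀ j k, j ≠ k → b j / w j ≠ b k / w k)
    (a : ℕ → ℝ) (f : ℝ → ℝ)
    (hf : ∀ x : ℝ, f x =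
      (∑ k, v k * max 0 (w k * x - b k) ^ (γ - 1) / (Nat.factorial (γ - 1) : ℝ))
        + ∑ j ∈ Finset.range γ, a j * x ^ j)
    (μ : SignedMeasure ℝ)
    (hμ : μ = ∑ k, (v k * (w k ^ γ / |w k|)) •
      (Measure.dirac (b k / w k)).toSignedMeasure) :
    (∀ φ : ℝ → ℝ, ContDiff ℝ (⊤ : ℕ∞) φ → HasCompactSupport φ →
      ∫ x : ℝ, f x * iteratedDeriv γ φ x
        = (-1 : ℝ) ^ γ * ∑ k, v k * (w k ^ γ / |w k|) * φ (b k / w k)) ∧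
    μ.totalVariation Set.univ = ENNReal.ofReal (∑ k, |v k| * |w k| ^ (γ - 1)) := by
  obtain ⟨m, hm1, rfl⟩ : ∃ m, 1 ≤ m ∧ γ = m + 1 := ⟨γ - 1, by omega, by omega⟩
  simp only [Nat.add_sub_cancel] at hf ⊢
  constructor
  · intro φ hφ hsupp
    have hΦc : Continuous (iteratedDeriv (m + 1) φ) := cont_iter hφ (m + 1)
    have hΦs : HasCompactSupport (iteratedDeriv (m + 1) φ) := cs_iter hsupp (m + 1)
    have hcontk : ∀ k : Fin K,
        Continuous (fun x : ℝ => v k * max 0 (w k * x - b k) ^ m / (Nat.factorial m : ℝ)) := by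
      intro k
      apply Continuous.div_const
      exact continuous_const.mul
        ((continuous_const.max ((continuous_const.mul continuous_id).sub continuous_const)).pow m)
    have hintk : ∀ k : Fin K, Integrable (fun x : ℝ =>
        v k * max 0 (w k * x - b k) ^ m / (Nat.factorial m : ℝ) * iteratedDeriv (m + 1) φ x) :=
      fun k => (cs_pmul hΦc hΦs (hcontk k)).2.2
    have hintj : ∀ j : ℕ, Integrable (fun x : ℝ =>
        a j * x ^ j * iteratedDeriv (m + 1) φ x) :=
      fun j => (cs_pmul hΦc hΦs (g := fun x => a j * x ^ j)
        (continuous_const.mul (continuous_pow j))).2.2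
    have h1 : (fun x : ℝ => f x * iteratedDeriv (m + 1) φ x)
        = fun x : ℝ => (∑ k, v k * max 0 (w k * x - b k) ^ m / (Nat.factorial m : ℝ)
            * iteratedDeriv (m + 1) φ x)
          + ∑ j ∈ Finset.range (m + 1), a j * x ^ j * iteratedDeriv (m + 1) φ x := by
      funext x
      rw [hf x, add_mul, Finset.sum_mul, Finset.sum_mul]
    rw [h1, integral_add (integrable_finset_sum _ fun k _ => hintk k)
        (integrable_finset_sum _ fun j _ => hintj j),
      integral_finset_sum _ (fun k _ => hintk k), integral_finset_sum _ (fun j _ => hintj j)]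
    have h2 : ∀ j ∈ Finset.range (m + 1),
        ∫ x : ℝ, a j * x ^ j * iteratedDeriv (m + 1) φ x = 0 := by
      intro j hj
      have : ∫ x : ℝ, a j * (x ^ j * iteratedDeriv (m + 1) φ x)
          = a j * ∫ x : ℝ, x ^ j * iteratedDeriv (m + 1) φ x := integral_const_mul _ _
      simp only [← mul_assoc] at this
      rw [this, key_poly hφ hsupp j (m + 1) (Finset.mem_range.mp hj), mul_zero]
    rw [Finset.sum_eq_zero h2, add_zero, Finset.mul_sum]
    refine Finset.sum_congr rfl fun k _ => ?_
    rw [term_eval hφ hsupp m hm1 (v k) (w k) (b k) (hw k)]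
    ring
  · rw [hμ, tv_diracs K (fun k => v k * (w k ^ (m + 1) / |w k|)) (fun k => b k / w k) hknots]
    congr 1
    refine Finset.sum_congr rfl fun k _ => ?_
    have hwk : |w k| ≠ 0 := abs_ne_zero.mpr (hw k)
    rw [abs_mul, abs_div, abs_pow, abs_abs, pow_succ, mul_div_assoc,
      div_self hwk, mul_one]
end

section
/- Let ρ : ℝ → ℝ be continuous, not identically zero on (0,∞) and not identically zero on (−∞,0), and satisfy ρ(wx) = g(w)ρ(x) for all w > 0 and all x ∈ ℝ for some g : (0,∞) → ℝ. Then there exist a ∈ ℝ and α, β ∈ ℝ such that ρ(x) = β·x^a for all x > 0 and ρ(x) = α·|x|^a for all x < 0, and g(w) = w^a for all w > 0. -/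
/-- Classification of admissible activation functions: a continuous `ρ`, not
identically zero on either half-line, satisfying `ρ(wx) = g(w)ρ(x)` for all
`w > 0`, must be a two-sided power function, and `g(w) = w^a` on `(0,∞)`. -/
theorem stmt_17 (ρ : ℝ → ℝ) (g : ℝ → ℝ)
    (hcont : Continuous ρ)
    (hpos : ∃ x > (0:ℝ), ρ x ≠ 0)
    (hneg : ∃ x < (0:ℝ), ρ x ≠ 0)
    (hcov : ∀ w > (0:ℝ), ∀ x : ℝ, ρ (w * x) = g w * ρ x) :
    ∃ (a α β : ℝ),
      (∀ x > (0:ℝ), ρ x = β * x ^ a) ∧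
      (∀ x < (0:ℝ), ρ x = α * |x| ^ a) ∧
      (∀ w > (0:ℝ), g w = w ^ a) := by
  obtain ⟨x₀, hx₀, hρx₀⟩ := hpos
  -- g formula
  have hg : ∀ w > (0:ℝ), g w = ρ (w * x₀) / ρ x₀ := by
    intro w hw
    rw [hcov w hw x₀]; field_simp
  have hg1 : g 1 = 1 := by
    have := hcov 1 one_pos x₀
    rw [one_mul] at this
    have h2 : g 1 * ρ x₀ = 1 * ρ x₀ := by rw [← this, one_mul]
    exact mul_right_cancel₀ hρx₀ h2
  -- multiplicativity
  have hmul : ∀ v > (0:ℝ), ∀ w > (0:ℝ), g (v * w) = g v * g w := by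
    intro v hv w hw
    have h1 := hcov (v * w) (mul_pos hv hw) x₀
    have h2 := hcov v hv (w * x₀)
    have h3 := hcov w hw x₀
    rw [← mul_assoc] at h2
    rw [h2, h3, ← mul_assoc] at h1
    exact mul_right_cancel₀ hρx₀ h1.symm
  -- g nonzero and positive on positives
  have hgne : ∀ w > (0:ℝ), g w ≠ 0 := by
    intro w hw hzero
    have := hmul w hw w⁻¹ (inv_pos.mpr hw)
    rw [mul_inv_cancel₀ (ne_of_gt hw), hg1, hzero, zero_mul] at this
    exact one_ne_zero this
  have hgpos : ∀ w > (0:ℝ), 0 < g w := by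
    intro w hw
    have hs : (0:ℝ) < Real.sqrt w := Real.sqrt_pos.mpr hw
    have := hmul _ hs _ hs
    rw [Real.mul_self_sqrt hw.le] at this
    have hne := hgne _ hs
    rw [this]
    exact lt_of_le_of_ne (mul_self_nonneg _) (by simpa [eq_comm] using mul_ne_zero hne hne)
  -- the additive map h t = log (g (exp t))
  set h : ℝ → ℝ := fun t => Real.log (g (Real.exp t)) with hh
  have hadd : ∀ s t : ℝ, h (s + t) = h s + h t := by
    intro s t
    simp only [hh, Real.exp_add]
    rw [hmul _ (Real.exp_pos s) _ (Real.exp_pos t),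
      Real.log_mul (hgne _ (Real.exp_pos s)) (hgne _ (Real.exp_pos t))]
  have hcont' : Continuous h := by
    have hgc : Continuous fun t => g (Real.exp t) := by
      have : (fun t => g (Real.exp t)) = fun t => ρ (Real.exp t * x₀) / ρ x₀ := by
        funext t; exact hg _ (Real.exp_pos t)
      rw [this]
      exact (hcont.comp (Real.continuous_exp.mul continuous_const)).div_const _
    refine continuous_iff_continuousAt.mpr fun t => ?_
    show ContinuousAt (Real.log ∘ fun t => g (Real.exp t)) t
    exact ContinuousAt.comp (Real.continuousAt_log (ne_of_gt (hgpos _ (Real.exp_pos t)))) hgc.continuousAt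
  -- h is linear
  set F : ℝ →+ ℝ := AddMonoidHom.mk' h hadd with hF
  have hlin : ∀ t : ℝ, h t = h 1 * t := by
    intro t
    have := (F.toRealLinearMap hcont').map_smul t (1:ℝ)
    simpa [hF, smul_eq_mul, mul_comm] using this
  have hgpow : ∀ w > (0:ℝ), g w = w ^ (h 1) := by
    intro w hw
    have hlog : h (Real.log w) = h 1 * Real.log w := hlin _
    rw [hh] at hlog
    simp only [Real.exp_log hw] at hlog
    have := congrArg Real.exp hlog
    rw [Real.exp_log (hgpos w hw)] at this
    rw [this, Real.rpow_def_of_pos hw, mul_comm]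
  refine ⟨h 1, ρ (-1), ρ 1, ?_, ?_, hgpow⟩
  · intro x hx
    have := hcov x hx 1
    rw [mul_one] at this
    rw [this, hgpow x hx, mul_comm]
  · intro x hx
    have habs : |x| * (-1) = x := by
      rw [abs_of_neg hx]; ring
    have := hcov |x| (abs_pos.mpr (ne_of_lt hx)) (-1)
    rw [habs] at this
    rw [this, hgpow _ (abs_pos.mpr (ne_of_lt hx)), mul_comm]
end
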